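/- arXiv:1408.3815 — 4 statements merged into one kernel-verified Lean document; each statement's English description precedes it below -/
import Mathlib

section
/- Let A be a commutative Banach algebra and I an ideal in A such that I is dense in A and A² + I = A. Then I is not a maximal ideal. -/
/-- `M` is an ideal of the (non-unital) commutative algebra `A`. -/
def IsIdeal {A : Type*} [NonUnitalCommRing A] [Module ℂ A] (M : Submodule ℂ A) : Prop :=
  ∀ a : A, ∀ x ∈ M, a * x ∈ M

/-- `M` is a maximal ideal of `A`. -/
def IsMaximalIdeal {A : Type*} [NonUnitalCommRing A] [Module ℂ A] (M : Submodule ℂ A) : Prop :=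
  IsIdeal M ∧ M ≠ ⊤ ∧ ∀ N : Submodule ℂ A, IsIdeal N → M ≤ N → N = M ∨ N = ⊤

/-- `A²`: the linear span of all products `a * b` with `a, b ∈ A`. -/
def sqIdeal (A : Type*) [NonUnitalCommRing A] [Module ℂ A] : Submodule ℂ A :=
  Submodule.span ℂ {x : A | ∃ a b : A, x = a * b}

/-!
If `I` is maximal and `A² ⊄ I`, pick `b` with `bA ⊄ I`; then `bA + I = A`, so `b = be + i₀` for
some `e` and `i₀ ∈ I`, and `e` is an identity modulo `I`: `a - ae ∈ I` for all `a`. By density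
some `x ∈ I` has `‖e - x‖ < 1`, and `u = e - x` is still an identity modulo `I`. Since `‖u‖ < 1`,
`u` has a quasi-inverse `v = u + vu` (a fixed point of a contraction), and then
`a = (a - au) + (av - (av)u) ∈ I` for every `a`, contradicting `I ≠ A`.
-/

def IsModularUnit {R A : Type*} [Semiring R] [NonUnitalRing A] [Module R A]
    (I : Submodule R A) (e : A) : Prop :=
  ∀ a : A, a - a * e ∈ I

theorem exists_eq_add_mul_of_norm_lt_one {A : Type*} [NonUnitalNormedRing A] [CompleteSpace A]
    {u : A} (hu : ‖u‖ < 1) : ∃ v : A, v = u + v * u := by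
  have hcontr : ContractingWith ‖u‖₊ (fun v : A => u + v * u) := by
    refine ⟨mod_cast hu, LipschitzWith.of_dist_le_mul fun v w => ?_⟩
    calc dist (u + v * u) (u + w * u) = ‖(v - w) * u‖ := by
          rw [dist_eq_norm, add_sub_add_left_eq_sub, sub_mul]
      _ ≤ ‖v - w‖ * ‖u‖ := norm_mul_le _ _
      _ = ‖u‖₊ * dist v w := by rw [dist_eq_norm, coe_nnnorm, mul_comm]
  exact ⟨_, hcontr.fixedPoint_isFixedPt.symm⟩

theorem IsModularUnit.eq_top_of_eq_add_mul {R A : Type*} [Semiring R] [NonUnitalRing A]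
    [Module R A] {I : Submodule R A} {u v : A} (hu : IsModularUnit I u) (hv : v = u + v * u) :
    I = ⊤ := by
  refine Submodule.eq_top_iff'.mpr fun a => ?_
  have hvu : v - v * u = u := sub_eq_iff_eq_add.mpr hv
  have hsplit : a = (a - a * u) + (a * v - a * v * u) := by
    rw [mul_assoc, ← mul_sub, hvu]; abel
  rw [hsplit]
  exact I.add_mem (hu a) (hu (a * v))

section Ideal

variable {A : Type*} [NonUnitalCommRing A] [Module ℂ A] {I : Submodule ℂ A}

theorem IsModularUnit.sub_of_mem {e : A} (he : IsModularUnit I e) (hI : IsIdeal I) {x : A}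
    (hx : x ∈ I) : IsModularUnit I (e - x) := fun a => by
  have hsplit : a - a * (e - x) = (a - a * e) + a * x := by noncomm_ring
  rw [hsplit]
  exact I.add_mem (he a) (hI a x hx)

theorem exists_mul_not_mem_of_sqIdeal_sup_eq_top (hne : I ≠ ⊤) (hsq : sqIdeal A ⊔ I = ⊤) :
    ∃ a b : A, a * b ∉ I := by
  by_contra! hmul
  have hsqle : sqIdeal A ≤ I := Submodule.span_le.mpr fun _ ⟨a, b, hab⟩ => hab ▸ hmul a b
  exact hne (by rwa [sup_eq_right.mpr hsqle] at hsq)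

theorem mem_range_mulLeft_sup_iff [SMulCommClass ℂ A A] {b y : A} :
    y ∈ LinearMap.range (LinearMap.mulLeft ℂ b) ⊔ I ↔ ∃ c, ∃ i ∈ I, b * c + i = y := by
  simp only [Submodule.mem_sup, LinearMap.mem_range, LinearMap.mulLeft_apply]
  constructor
  · rintro ⟨_, ⟨c, rfl⟩, i, hi, rfl⟩
    exact ⟨c, i, hi, rfl⟩
  · rintro ⟨c, i, hi, rfl⟩
    exact ⟨b * c, ⟨c, rfl⟩, i, hi, rfl⟩

theorem IsIdeal.range_mulLeft_sup [SMulCommClass ℂ A A] (hI : IsIdeal I) (b : A) :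
    IsIdeal (LinearMap.range (LinearMap.mulLeft ℂ b) ⊔ I) := by
  intro a y hy
  obtain ⟨c, i, hi, rfl⟩ := mem_range_mulLeft_sup_iff.mp hy
  exact mem_range_mulLeft_sup_iff.mpr ⟨a * c, a * i, hI a i hi, by rw [mul_add, mul_left_comm]⟩

theorem IsIdeal.exists_isModularUnit_of_range_mulLeft_sup_eq_top [SMulCommClass ℂ A A]
    (hI : IsIdeal I) {b : A} (htop : LinearMap.range (LinearMap.mulLeft ℂ b) ⊔ I = ⊤) :
    ∃ e, IsModularUnit I e := by
  have hmem : ∀ y, ∃ c, ∃ i ∈ I, b * c + i = y := fun y =>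
    mem_range_mulLeft_sup_iff.mp (htop ▸ Submodule.mem_top)
  obtain ⟨e, i₀, hi₀, hb⟩ := hmem b
  refine ⟨e, fun a => ?_⟩
  obtain ⟨c, i, hi, rfl⟩ := hmem a
  have hsplit : b * c + i - (b * c + i) * e = c * i₀ + (i - e * i) := by
    rw [eq_sub_of_add_eq' hb, mul_sub, add_mul, mul_comm e i, mul_left_comm c b e, mul_comm c b,
      mul_assoc]
    abel
  rw [hsplit]
  exact I.add_mem (hI c i₀ hi₀) (I.sub_mem hi (hI e i hi))

theorem IsMaximalIdeal.exists_isModularUnit [SMulCommClass ℂ A A] (hmax : IsMaximalIdeal I)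
    {a b : A} (hab : a * b ∉ I) : ∃ e, IsModularUnit I e := by
  obtain ⟨hI, -, hle⟩ := hmax
  refine hI.exists_isModularUnit_of_range_mulLeft_sup_eq_top (b := b) ?_
  refine (hle _ (hI.range_mulLeft_sup b) le_sup_right).resolve_left fun hM => hab ?_
  exact hM ▸ mem_range_mulLeft_sup_iff.mpr ⟨a, 0, I.zero_mem, by rw [add_zero, mul_comm]⟩

end Ideal

theorem IsModularUnit.eq_top_of_dense {A : Type*} [NonUnitalNormedCommRing A] [NormedSpace ℂ A]
    [CompleteSpace A] {I : Submodule ℂ A} {e : A} (he : IsModularUnit I e) (hI : IsIdeal I)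
    (hdense : Dense (I : Set A)) : I = ⊤ := by
  obtain ⟨x, hx, hex⟩ := hdense.exists_dist_lt e one_pos
  rw [dist_eq_norm] at hex
  obtain ⟨v, hv⟩ := exists_eq_add_mul_of_norm_lt_one hex
  exact (he.sub_of_mem hI hx).eq_top_of_eq_add_mul hv

theorem dense_ideal_not_maximal_general
    {A : Type*} [NonUnitalNormedCommRing A] [NormedSpace ℂ A]
    [SMulCommClass ℂ A A] [CompleteSpace A]
    (I : Submodule ℂ A) (hI : IsIdeal I) (hdense : Dense (I : Set A))
    (hsq : sqIdeal A ⊔ I = ⊤) :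
    ¬ IsMaximalIdeal I := by
  intro hmax
  obtain ⟨a, b, hab⟩ := exists_mul_not_mem_of_sqIdeal_sup_eq_top hmax.2.1 hsq
  obtain ⟨e, he⟩ := hmax.exists_isModularUnit hab
  exact hmax.2.1 (he.eq_top_of_dense hI hdense)

/-- Let `A` be a commutative Banach algebra and `I` a dense ideal with `A² + I = A`.
Then `I` is not a maximal ideal. -/
theorem dense_ideal_not_maximal
    {A : Type*} [NonUnitalNormedCommRing A] [NormedSpace ℂ A]
    [IsScalarTower ℂ A A] [SMulCommClass ℂ A A] [CompleteSpace A]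
    (I : Submodule ℂ A) (hI : IsIdeal I) (hdense : Dense (I : Set A))
    (hsq : sqIdeal A ⊔ I = ⊤) :
    ¬ IsMaximalIdeal I :=
  dense_ideal_not_maximal_general I hI hdense hsq
end

section
/- The ideal I = {f ∈ O(ℂ) : f(n) = 0 for all sufficiently large n ∈ ℕ} is a dense proper ideal in the Fréchet algebra O(ℂ) of entire functions. -/
/-!
Euler's finite sine product `sin (π z) = π z ∏_{j < n} (1 - z² / (j + 1)²) · S n z` has an entire
remainder `S n`, the normalised integral of `cos (2 z x)` against `cos²ⁿ x` on `[0, π/2]`. It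
vanishes at every natural number `m > n`, where `sin (π m) = 0` but the finite product does not.
Since `|cos (2 z x) - 1| ≲ sin² x` uniformly for `z` in a disc and
`∫ sin² x cos²ⁿ x = ∫ cos²ⁿ x / (2n + 2)`, `S n → 1` locally uniformly, so every entire `f` is the
limit of the functions `f · S n`, which lie in the ideal.
-/

open Real Filter Topology

namespace Complex

theorem norm_cos_le_exp_norm (w : ℂ) : ‖cos w‖ ≤ Real.exp ‖w‖ := by
  have h : ∀ u : ℂ, ‖u‖ = ‖w‖ → ‖exp u‖ ≤ Real.exp ‖w‖ := fun u hu =>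
    hu ▸ norm_exp_le_exp_norm u
  rw [cos, norm_div, Complex.norm_ofNat]
  linarith [norm_add_le (exp (w * I)) (exp (-w * I)), h (w * I) (by simp),
    h (-w * I) (by simp)]

theorem norm_sin_le_norm_mul_exp_norm (w : ℂ) : ‖sin w‖ ≤ ‖w‖ * Real.exp ‖w‖ := by
  have hw : w ∈ Metric.closedBall (0 : ℂ) ‖w‖ := by simp
  have := (convex_closedBall (0 : ℂ) ‖w‖).norm_image_sub_le_of_norm_hasDerivWithin_le
    (fun u _ => (hasDerivAt_sin u).hasDerivWithinAt)
    (fun u hu => (norm_cos_le_exp_norm u).trans (Real.exp_le_exp.2 (by simpa using hu)))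
    (Metric.mem_closedBall_self (norm_nonneg w)) hw
  simpa [mul_comm] using this

theorem norm_cos_two_mul_sub_one_le (w : ℂ) :
    ‖cos (2 * w) - 1‖ ≤ 2 * ‖w‖ ^ 2 * Real.exp (2 * ‖w‖) := by
  have hsq : cos (2 * w) - 1 = -(2 * sin w ^ 2) := by
    rw [cos_two_mul']; linear_combination sin_sq_add_cos_sq w
  calc ‖cos (2 * w) - 1‖ = 2 * ‖sin w‖ ^ 2 := by simp [hsq]
    _ ≤ 2 * (‖w‖ * Real.exp ‖w‖) ^ 2 := by gcongr; exact norm_sin_le_norm_mul_exp_norm w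
    _ = 2 * ‖w‖ ^ 2 * Real.exp (2 * ‖w‖) := by rw [mul_pow, ← Real.exp_nat_mul]; push_cast; ring

end Complex

theorem intervalIntegral.hasDerivAt_integral_of_continuous {𝕜 E : Type*} [RCLike 𝕜]
    [NormedAddCommGroup E] [NormedSpace ℝ E] [NormedSpace 𝕜 E] {F F' : 𝕜 → ℝ → E} {a b : ℝ}
    (hF : Continuous (Function.uncurry F)) (hF' : Continuous (Function.uncurry F'))
    (h_diff : ∀ z t, HasDerivAt (F · t) (F' z t) z) (z₀ : 𝕜) :
    HasDerivAt (fun z => ∫ t in a..b, F z t) (∫ t in a..b, F' z₀ t) z₀ := by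
  obtain ⟨C, hC⟩ := ((isCompact_closedBall z₀ 1).prod (isCompact_uIcc (a := a) (b := b))
    ).exists_bound_of_continuousOn hF'.continuousOn
  have hcont : ∀ z, Continuous (F z) := fun z => hF.comp (Continuous.prodMk_right z)
  exact (hasDerivAt_integral_of_dominated_loc_of_deriv_le (bound := fun _ => C)
    (Metric.closedBall_mem_nhds z₀ one_pos) (.of_forall fun z => (hcont z).aestronglyMeasurable)
    ((hcont z₀).intervalIntegrable _ _)
    (hF'.comp (Continuous.prodMk_right z₀)).aestronglyMeasurable
    (.of_forall fun t ht z hz => hC (z, t) ⟨hz, Set.uIoc_subset_uIcc ht⟩) intervalIntegrable_const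
    (.of_forall fun t _ z _ => h_diff z t)).2

theorem integral_sin_sq_mul_cos_pow (n : ℕ) :
    ∫ x in (0 : ℝ)..π / 2, sin x ^ 2 * cos x ^ n =
      (∫ x in (0 : ℝ)..π / 2, cos x ^ n) / (n + 2) := by
  have hcos : ∀ k : ℕ, IntervalIntegrable (fun x => cos x ^ k) MeasureTheory.volume 0 (π / 2) :=
    fun k => (continuous_cos.pow k).intervalIntegrable _ _
  have hsplit : (fun x => sin x ^ 2 * cos x ^ n) = fun x => cos x ^ n - cos x ^ (n + 2) := by
    ext x; rw [pow_add, sin_sq]; ring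
  rw [hsplit, intervalIntegral.integral_sub (hcos n) (hcos (n + 2)), integral_cos_pow]
  simp only [cos_pi_div_two, sin_zero]
  field_simp
  ring

-- `∏_{j ≥ n} (1 - z² / (j + 1)²)`, in the integral form left by `EulerSine.sin_pi_mul_eq`
noncomputable def eulerSineTail (n : ℕ) (z : ℂ) : ℂ :=
  (∫ x in (0 : ℝ)..π / 2, Complex.cos (2 * z * x) * (cos x : ℂ) ^ (2 * n)) /
    (∫ x in (0 : ℝ)..π / 2, cos x ^ (2 * n) : ℝ)

theorem sin_pi_mul_eq_mul_eulerSineTail (z : ℂ) (n : ℕ) :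
    Complex.sin (π * z) =
      π * z * (∏ j ∈ Finset.range n, (1 - z ^ 2 / ((j : ℂ) + 1) ^ 2)) * eulerSineTail n z := by
  rw [EulerSine.sin_pi_mul_eq z n, eulerSineTail, mul_div_assoc]

theorem eulerSineTail_natCast_eq_zero {n m : ℕ} (hnm : n < m) : eulerSineTail n m = 0 := by
  have hfactor : ∀ j ∈ Finset.range n, (1 - (m : ℂ) ^ 2 / ((j : ℂ) + 1) ^ 2) ≠ 0 := by
    intro j hj
    rw [Finset.mem_range] at hj
    rw [sub_ne_zero, ne_comm, Ne, div_eq_one_iff_eq (pow_ne_zero _ (Nat.cast_add_one_ne_zero j))]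
    exact_mod_cast (Nat.pow_lt_pow_left (by omega) two_ne_zero).ne'
  have h := sin_pi_mul_eq_mul_eulerSineTail m n
  rw [mul_comm _ (m : ℂ), Complex.sin_nat_mul_pi, eq_comm, mul_eq_zero] at h
  refine h.resolve_left (mul_ne_zero (mul_ne_zero ?_ ?_) (Finset.prod_ne_zero_iff.2 hfactor))
  · exact_mod_cast (Nat.zero_lt_of_lt hnm).ne'
  · exact_mod_cast Real.pi_ne_zero

theorem differentiable_eulerSineTail (n : ℕ) : Differentiable ℂ (eulerSineTail n) :=
  fun z₀ => ((intervalIntegral.hasDerivAt_integral_of_continuous (by fun_prop) (by fun_prop)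
    (fun z x => ((((hasDerivAt_id z).const_mul 2).mul_const (x : ℂ)).ccos).mul_const _)
    z₀).differentiableAt).div_const _

theorem norm_cos_two_mul_mul_sub_one_le_sin_sq {R x : ℝ} {z : ℂ} (hz : ‖z‖ ≤ R)
    (hx : x ∈ Set.Icc 0 (π / 2)) :
    ‖Complex.cos (2 * z * x) - 1‖ ≤ (π * R) ^ 2 * Real.exp (π * R) / 2 * sin x ^ 2 := by
  obtain ⟨hx0, hxπ⟩ := hx
  have hzx : ‖z * x‖ ≤ R * x := by
    rw [norm_mul, Complex.norm_real, norm_of_nonneg hx0]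
    exact mul_le_mul_of_nonneg_right hz hx0
  have hjordan : x ≤ π / 2 * sin x := by
    have := mul_le_sin hx0 hxπ
    rw [div_mul_eq_mul_div, div_le_iff₀ pi_pos] at this
    linarith
  have hR : 0 ≤ R := (norm_nonneg _).trans hz
  calc ‖Complex.cos (2 * z * x) - 1‖ ≤ 2 * ‖z * x‖ ^ 2 * Real.exp (2 * ‖z * x‖) := by
        rw [mul_assoc]; exact Complex.norm_cos_two_mul_sub_one_le _
    _ ≤ 2 * (R * x) ^ 2 * Real.exp (π * R) := by
        have : 2 * ‖z * x‖ ≤ π * R := by nlinarith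
        gcongr
    _ ≤ 2 * (R * (π / 2 * sin x)) ^ 2 * Real.exp (π * R) := by gcongr
    _ = (π * R) ^ 2 * Real.exp (π * R) / 2 * sin x ^ 2 := by ring

theorem norm_eulerSineTail_sub_one_le {R : ℝ} {z : ℂ} (hz : ‖z‖ ≤ R) (n : ℕ) :
    ‖eulerSineTail n z - 1‖ ≤ (π * R) ^ 2 * Real.exp (π * R) / (4 * (n + 1)) := by
  set C := ∫ x in (0 : ℝ)..π / 2, cos x ^ (2 * n)
  set K := (π * R) ^ 2 * Real.exp (π * R) / 2
  have hC : 0 < C := EulerSine.integral_cos_pow_pos _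
  have hsub : eulerSineTail n z - 1 =
      (∫ x in (0 : ℝ)..π / 2, (Complex.cos (2 * z * x) - 1) * (cos x : ℂ) ^ (2 * n)) / C := by
    have hCint : (C : ℂ) = ∫ x in (0 : ℝ)..π / 2, (cos x : ℂ) ^ (2 * n) := by
      simp [C, ← intervalIntegral.integral_ofReal]
    rw [eulerSineTail, div_sub_one (by exact_mod_cast hC.ne'), hCint,
      ← intervalIntegral.integral_sub (by apply Continuous.intervalIntegrable; fun_prop)
        (by apply Continuous.intervalIntegrable; fun_prop)]
    simp only [sub_mul, one_mul]
  have hint : ‖∫ x in (0 : ℝ)..π / 2, (Complex.cos (2 * z * x) - 1) * (cos x : ℂ) ^ (2 * n)‖ ≤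
      K * (C / (2 * n + 2)) := by
    calc _ ≤ ∫ x in (0 : ℝ)..π / 2, K * (sin x ^ 2 * cos x ^ (2 * n)) := by
          refine intervalIntegral.norm_integral_le_of_norm_le (by positivity)
            (.of_forall fun x hx => ?_) (by apply Continuous.intervalIntegrable; fun_prop)
          have hx' : x ∈ Set.Icc 0 (π / 2) := Set.Ioc_subset_Icc_self hx
          have hcos : 0 ≤ cos x := cos_nonneg_of_mem_Icc ⟨by linarith [pi_pos, hx'.1], hx'.2⟩
          rw [norm_mul, norm_pow, Complex.norm_real, norm_of_nonneg hcos, ← mul_assoc]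
          gcongr
          exact norm_cos_two_mul_mul_sub_one_le_sin_sq hz hx'
      _ = K * (C / (2 * n + 2)) := by
          rw [intervalIntegral.integral_const_mul, integral_sin_sq_mul_cos_pow]
          push_cast; rfl
  rw [hsub, norm_div, Complex.norm_real, norm_of_nonneg hC.le, div_le_iff₀ hC]
  calc _ ≤ K * (C / (2 * n + 2)) := hint
    _ = _ := by field_simp; ring

theorem tendstoLocallyUniformly_eulerSineTail :
    TendstoLocallyUniformly eulerSineTail (fun _ => 1) atTop := by
  rw [tendstoLocallyUniformly_iff_forall_isCompact]
  intro K hK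
  obtain ⟨R, hR⟩ := hK.isBounded.subset_closedBall 0
  have hbound : Tendsto (fun n : ℕ => (π * R) ^ 2 * Real.exp (π * R) / (4 * (n + 1))) atTop (𝓝 0) :=
    tendsto_const_nhds.div_atTop <|
      tendsto_natCast_atTop_atTop.atTop_add tendsto_const_nhds |>.const_mul_atTop four_pos
  rw [Metric.tendstoUniformlyOn_iff]
  intro ε hε
  filter_upwards [hbound.eventually (gt_mem_nhds hε)] with n hn z hz
  rw [dist_comm, dist_eq_norm]
  exact (norm_eulerSineTail_sub_one_le (by simpa using hR hz) n).trans_lt hn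

theorem Ideal.dense_of_tendsto_one {A ι : Type*} [Semiring A] [TopologicalSpace A]
    [ContinuousMul A] {I : Ideal A} {l : Filter ι} [l.NeBot] {e : ι → A}
    (he : Tendsto e l (𝓝 1)) (heI : ∀ᶠ i in l, e i ∈ I) : Dense (I : Set A) :=
  fun f => mem_closure_of_tendsto (by simpa using he.const_mul f)
    (heI.mono fun _ hi => I.mul_mem_left f hi)

namespace ContinuousMap

variable {X R : Type*} [TopologicalSpace X] [CommSemiring R] [TopologicalSpace R]
  [IsTopologicalSemiring R]

def eventuallyZeroIdeal (l : Filter X) : Ideal C(X, R) where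
  carrier := {f | ∀ᶠ x in l, f x = 0}
  add_mem' hf hg := by filter_upwards [hf, hg] with x hfx hgx; simp [hfx, hgx]
  zero_mem' := by simp
  smul_mem' c f hf := by filter_upwards [hf] with x hx; simp [hx]

theorem mem_eventuallyZeroIdeal {l : Filter X} {f : C(X, R)} :
    f ∈ eventuallyZeroIdeal l ↔ ∀ᶠ x in l, f x = 0 :=
  Iff.rfl

theorem eventuallyZeroIdeal_ne_top (l : Filter X) [l.NeBot] [Nontrivial R] :
    eventuallyZeroIdeal (R := R) l ≠ ⊤ := by
  rw [Ne, Ideal.eq_top_iff_one, mem_eventuallyZeroIdeal]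
  simpa using NeBot.ne ‹_›

end ContinuousMap

/-- The algebra `O(ℂ)` of entire functions, as a subalgebra of `C(ℂ, ℂ)`; its subspace
topology (from the compact-open topology) is the topology of uniform convergence on
compact subsets of `ℂ`, making it a Fréchet algebra. -/
noncomputable def Entire : Subalgebra ℂ C(ℂ, ℂ) where
  carrier := {f : C(ℂ, ℂ) | Differentiable ℂ f}
  mul_mem' hf hg := hf.mul hg
  add_mem' hf hg := hf.add hg
  algebraMap_mem' c := by
    show Differentiable ℂ ⇑(algebraMap ℂ C(ℂ, ℂ) c)
    simp only [Algebra.algebraMap_eq_smul_one]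
    exact (differentiable_const (1 : ℂ)).const_smul c

noncomputable def Entire.eulerSineTail (n : ℕ) : Entire :=
  ⟨⟨_root_.eulerSineTail n, (differentiable_eulerSineTail n).continuous⟩,
    differentiable_eulerSineTail n⟩

theorem Entire.tendsto_eulerSineTail : Tendsto Entire.eulerSineTail atTop (𝓝 1) :=
  tendsto_subtype_rng.2 <|
    ContinuousMap.tendsto_iff_tendstoLocallyUniformly.2 tendstoLocallyUniformly_eulerSineTail

/-- The set `I = {f ∈ O(ℂ) : f(n) = 0 for all sufficiently large n ∈ ℕ}` is a dense
proper ideal in the Fréchet algebra `O(ℂ)` of entire functions. -/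
theorem eventually_vanishing_on_naturals_dense_proper_ideal :
    ∃ I : Ideal Entire,
      (∀ f : Entire, f ∈ I ↔ ∃ N : ℕ, ∀ n : ℕ, N ≤ n → (f : C(ℂ, ℂ)) n = 0) ∧
      Dense (I : Set Entire) ∧ I ≠ ⊤ := by
  set I := (ContinuousMap.eventuallyZeroIdeal (map ((↑) : ℕ → ℂ) atTop)).comap Entire.val
  have hmem (f : Entire) : f ∈ I ↔ ∀ᶠ n : ℕ in atTop, (f : C(ℂ, ℂ)) n = 0 := Iff.rfl
  have htail_mem (k : ℕ) : Entire.eulerSineTail k ∈ I :=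
    (hmem _).2 <| (eventually_gt_atTop k).mono fun _ => eulerSineTail_natCast_eq_zero
  refine ⟨I, fun f => (hmem f).trans eventually_atTop, ?_, ?_⟩
  · exact Ideal.dense_of_tendsto_one Entire.tendsto_eulerSineTail (.of_forall htail_mem)
  · exact Ideal.comap_ne_top _ (ContinuousMap.eventuallyZeroIdeal_ne_top _)
end

section
/- There exists a maximal ideal M in O(ℂ) that is dense, not closed, and not of the form M_z for any z ∈ ℂ; in particular M does not have codimension 1. -/
set_option synthInstance.maxHeartbeats 4000000
set_option maxHeartbeats 4000000

/-- `M` has codimension `1`, i.e. `M` is the kernel of a nonzero linear functional. -/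
noncomputable def HasCodimOne (M : Ideal Entire) : Prop :=
  ∃ ψ : Entire →ₗ[ℂ] ℂ, ψ ≠ 0 ∧ ∀ f : Entire, f ∈ M ↔ ψ f = 0

open Complex Metric Filter

/-- The entire function `z ↦ 1 / Γ(c - z)`, which vanishes at all integers `≥ c`. -/
noncomputable def gammaInv (c : ℕ) : Entire :=
  ⟨⟨fun z => (Complex.Gamma ((c : ℂ) - z))⁻¹,
    (Complex.differentiable_one_div_Gamma.comp
      ((differentiable_const ((c : ℂ))).sub differentiable_id)).continuous⟩,
    Complex.differentiable_one_div_Gamma.comp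
      ((differentiable_const ((c : ℂ))).sub differentiable_id)⟩

lemma gammaInv_apply (c : ℕ) (z : ℂ) :
    (gammaInv c : C(ℂ, ℂ)) z = (Complex.Gamma ((c : ℂ) - z))⁻¹ := rfl

lemma gammaInv_nat_zero (c : ℕ) {n : ℕ} (h : c ≤ n) : (gammaInv c : C(ℂ, ℂ)) n = 0 := by
  rw [gammaInv_apply]
  have h1 : ((c : ℂ) - n) = -((n - c : ℕ) : ℂ) := by
    rw [Nat.cast_sub h]; ring
  rw [h1, Complex.Gamma_neg_nat_eq_zero, inv_zero]

/-- The ideal of entire functions vanishing at all sufficiently large naturals. -/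
noncomputable def Ivan : Ideal Entire where
  carrier := {f | ∃ N : ℕ, ∀ n : ℕ, N ≤ n → (f : C(ℂ, ℂ)) n = 0}
  add_mem' := by
    rintro f g ⟨N, hN⟩ ⟨N', hN'⟩
    refine ⟨max N N', fun n hn => ?_⟩
    have : ((f + g : Entire) : C(ℂ, ℂ)) n = (f : C(ℂ, ℂ)) n + (g : C(ℂ, ℂ)) n := rfl
    rw [this, hN n (le_trans (le_max_left _ _) hn), hN' n (le_trans (le_max_right _ _) hn),
      add_zero]
  zero_mem' := ⟨0, fun n _ => rfl⟩
  smul_mem' := by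
    rintro c f ⟨N, hN⟩
    refine ⟨N, fun n hn => ?_⟩
    have : ((c • f : Entire) : C(ℂ, ℂ)) n = (c : C(ℂ, ℂ)) n * (f : C(ℂ, ℂ)) n := rfl
    rw [this, hN n hn, mul_zero]

lemma gammaInv_mem (c : ℕ) : gammaInv c ∈ Ivan :=
  ⟨c, fun _ hn => gammaInv_nat_zero c hn⟩

lemma Ivan_ne_top : Ivan ≠ ⊤ := by
  intro h
  have h1 : (1 : Entire) ∈ Ivan := h ▸ Submodule.mem_top
  obtain ⟨N, hN⟩ := h1
  have := hN N le_rfl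
  simp only [OneMemClass.coe_one, ContinuousMap.one_apply] at this
  exact one_ne_zero this

lemma gamma_ne_zero_of_small {N : ℕ} {z : ℂ} {r : ℝ} (hz : ‖z‖ ≤ r) (hr : r < N) :
    Complex.Gamma ((N : ℂ) - z) ≠ 0 := by
  rw [Ne, Complex.Gamma_eq_zero_iff]
  rintro ⟨m, hm⟩
  have hzval : z = ((N + m : ℕ) : ℂ) := by push_cast; linear_combination -hm
  rw [hzval] at hz
  rw [Complex.norm_natCast] at hz
  have : (N : ℝ) ≤ (N + m : ℕ) := by exact_mod_cast Nat.le_add_right N m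
  linarith

/-- Key approximation: an element of `Ivan` uniformly close to `1` on a closed ball. -/
lemma Ivan_approx (R : ℝ) {ε : ℝ} (hε : 0 < ε) :
    ∃ f ∈ Ivan, ∀ z ∈ closedBall (0 : ℂ) R, ‖(f : C(ℂ, ℂ)) z - 1‖ < ε := by
  set R₀ : ℝ := max R 0 with hR₀
  have hR₀0 : 0 ≤ R₀ := le_max_right _ _
  obtain ⟨N, hN⟩ := exists_nat_gt (R₀ + 2)
  set r : NNReal := ⟨R₀ + 1, by positivity⟩ with hr
  set g : ℂ → ℂ := fun z => Complex.Gamma ((N : ℂ) - z) with hg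
  have hgne : ∀ z : ℂ, ‖z‖ ≤ R₀ + 1 → Complex.Gamma ((N : ℂ) - z) ≠ 0 := fun z hz =>
    gamma_ne_zero_of_small hz (by linarith)
  have hdiff : DifferentiableOn ℂ g (closedBall (0 : ℂ) r) := by
    intro z hz
    rw [mem_closedBall, dist_zero_right] at hz
    refine DifferentiableAt.differentiableWithinAt ?_
    have hs : ∀ m : ℕ, (N : ℂ) - z ≠ -m := by
      intro m hm
      exact hgne z hz (by rw [hm]; exact Complex.Gamma_neg_nat_eq_zero m)
    exact (Complex.differentiableAt_Gamma _ hs).comp z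
      ((differentiableAt_const _).sub differentiableAt_id)
  have hrpos : 0 < r := by
    rw [← NNReal.coe_lt_coe]
    show (0 : ℝ) < R₀ + 1
    positivity
  have hp := hdiff.hasFPowerSeriesOnBall hrpos
  set p := cauchyPowerSeries g 0 r with hpdef
  set r' : NNReal := ⟨R₀ + 2⁻¹, by positivity⟩ with hr'
  have hr'r : (r' : ENNReal) < (r : ENNReal) := by
    rw [ENNReal.coe_lt_coe, ← NNReal.coe_lt_coe]
    show R₀ + 2⁻¹ < R₀ + 1
    norm_num
  have htu := hp.tendstoUniformlyOn' hr'r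
  -- bound on 1/Γ(N - z)
  obtain ⟨C, hC⟩ := (isCompact_closedBall (0 : ℂ) R₀).exists_bound_of_continuousOn
    ((map_continuous (gammaInv N : C(ℂ, ℂ))).continuousOn)
  set C' : ℝ := max C 0 with hC'
  have hC'0 : 0 ≤ C' := le_max_right _ _
  have hCb : ∀ z ∈ closedBall (0 : ℂ) R₀, ‖(Complex.Gamma ((N : ℂ) - z))⁻¹‖ ≤ C' := by
    intro z hz
    exact le_trans (hC z hz) (le_max_left _ _)
  set ε' : ℝ := ε / (C' + 1) with hε'def
  have hε' : 0 < ε' := by positivity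
  have hev := (Metric.tendstoUniformlyOn_iff.1 htu) ε' hε'
  obtain ⟨n₀, hn₀⟩ := hev.exists
  -- the polynomial part is entire
  have hqd : Differentiable ℂ fun z : ℂ => p.partialSum n₀ z := by
    have heq : (fun z : ℂ => p.partialSum n₀ z)
        = fun z : ℂ => ∑ i ∈ Finset.range n₀, z ^ i • p.coeff i := by
      funext z
      simp only [FormalMultilinearSeries.partialSum]
      exact Finset.sum_congr rfl fun i _ => p.apply_eq_pow_smul_coeff
    rw [heq]
    exact Differentiable.fun_sum fun i _ =>
      ((differentiable_id.pow i).smul_const (p.coeff i))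
  set q : Entire := ⟨⟨fun z => p.partialSum n₀ z, hqd.continuous⟩, hqd⟩ with hq
  refine ⟨q * gammaInv N, Ideal.mul_mem_left Ivan q (gammaInv_mem N), ?_⟩
  intro z hz
  rw [mem_closedBall, dist_zero_right] at hz
  have hzR₀ : ‖z‖ ≤ R₀ := le_trans hz (le_max_left _ _)
  have hzball : z ∈ ball (0 : ℂ) r' := by
    rw [mem_ball, dist_zero_right]
    show ‖z‖ < R₀ + 2⁻¹
    linarith [hzR₀]
  have happly : ((q * gammaInv N : Entire) : C(ℂ, ℂ)) z
      = p.partialSum n₀ z * (Complex.Gamma ((N : ℂ) - z))⁻¹ := rfl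
  have hone : g z * (Complex.Gamma ((N : ℂ) - z))⁻¹ = 1 :=
    mul_inv_cancel₀ (hgne z (by linarith))
  have hdist := hn₀ z hzball
  rw [dist_eq_norm] at hdist
  have hns : ‖p.partialSum n₀ z - g z‖ ≤ ε' := by
    rw [norm_sub_rev]
    simpa using hdist.le
  have hrw : p.partialSum n₀ z * (Complex.Gamma ((N : ℂ) - z))⁻¹ - 1
      = (p.partialSum n₀ z - g z) * (Complex.Gamma ((N : ℂ) - z))⁻¹ := by
    rw [sub_mul, hone]
  rw [happly, hrw, norm_mul]
  have hb := hCb z (by rw [mem_closedBall, dist_zero_right]; exact hzR₀)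
  calc ‖p.partialSum n₀ z - g z‖ * ‖(Complex.Gamma ((N : ℂ) - z))⁻¹‖
      ≤ ε' * C' := mul_le_mul hns hb (norm_nonneg _) hε'.le
    _ < ε := by
        rw [hε'def, div_mul_eq_mul_div, div_lt_iff₀ (by positivity : (0:ℝ) < C' + 1)]
        nlinarith

/-- A sequence in `Ivan` converging to `1` in the compact-open topology. -/
lemma Ivan_seq : ∃ a : ℕ → Entire, (∀ k, a k ∈ Ivan) ∧
    Tendsto (fun k => ((a k : C(ℂ, ℂ)))) atTop (nhds (1 : C(ℂ, ℂ))) := by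
  have hpos : ∀ k : ℕ, (0 : ℝ) < (k + 1 : ℝ)⁻¹ := fun k => by positivity
  choose a ha hb using fun k : ℕ => Ivan_approx (k : ℝ) (hpos k)
  refine ⟨a, ha, ?_⟩
  rw [ContinuousMap.tendsto_iff_forall_isCompact_tendstoUniformlyOn]
  intro K hK
  rw [Metric.tendstoUniformlyOn_iff]
  intro ε hε
  obtain ⟨R, hR⟩ := hK.isBounded.subset_closedBall 0
  obtain ⟨k₀, hk₀⟩ := exists_nat_gt (max R ε⁻¹)
  filter_upwards [eventually_ge_atTop k₀] with k hk
  intro x hx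
  have hkR : R ≤ (k : ℝ) := by
    have h1 : (k₀ : ℝ) ≤ k := by exact_mod_cast hk
    have := le_max_left R ε⁻¹
    linarith
  have hxk : x ∈ closedBall (0 : ℂ) (k : ℝ) :=
    closedBall_subset_closedBall hkR (hR hx)
  have hbx := hb k x hxk
  rw [dist_comm, dist_eq_norm]
  have h1 : dist ((a k : C(ℂ, ℂ)) x) ((1 : C(ℂ, ℂ)) x) = ‖(a k : C(ℂ, ℂ)) x - 1‖ := by
    rw [dist_eq_norm]; rfl
  rw [ContinuousMap.one_apply]
  refine lt_trans hbx ?_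
  -- (k+1)⁻¹ < ε
  have hεk : ε⁻¹ < (k : ℝ) + 1 := by
    have h1 : (k₀ : ℝ) ≤ k := by exact_mod_cast hk
    have := le_max_right R ε⁻¹
    linarith
  have h2 : ((k : ℝ) + 1)⁻¹ < (ε⁻¹)⁻¹ := inv_strictAnti₀ (by positivity) hεk
  rwa [inv_inv] at h2

/-- There is a maximal ideal `M` in `O(ℂ)` that is dense, not closed, and not of the form
`M_z = {f : f z = 0}` for any `z ∈ ℂ`; in particular `M` does not have codimension `1`. -/
theorem exists_dense_maximal_ideal_of_entire :
    ∃ M : Ideal Entire, M.IsMaximal ∧ Dense (M : Set Entire) ∧ ¬IsClosed (M : Set Entire) ∧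
      (∀ z : ℂ, ¬∀ f : Entire, f ∈ M ↔ (f : C(ℂ, ℂ)) z = 0) ∧
      ¬HasCodimOne M := by
  obtain ⟨M, hMmax, hIM⟩ := Ivan.exists_le_maximal Ivan_ne_top
  obtain ⟨a, haI, haconv⟩ := Ivan_seq
  -- Density
  have hdense : Dense (M : Set Entire) := by
    intro f
    have hconv : Tendsto (fun k => f * a k) atTop (nhds f) := by
      rw [tendsto_subtype_rng]
      have h1 : Tendsto (fun k => (f : C(ℂ, ℂ)) * (a k : C(ℂ, ℂ))) atTop
          (nhds ((f : C(ℂ, ℂ)) * 1)) :=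
        (tendsto_const_nhds (x := (f : C(ℂ, ℂ)))).mul haconv
      rw [mul_one] at h1
      exact h1
    exact mem_closure_of_tendsto hconv
      (Eventually.of_forall fun k => Ideal.mul_mem_left M f (hIM (haI k)))
  -- Not closed
  have hnotclosed : ¬IsClosed (M : Set Entire) := by
    intro hcl
    have huniv : (M : Set Entire) = Set.univ := by
      rw [← hcl.closure_eq]
      exact hdense.closure_eq
    have h1 : (1 : Entire) ∈ M := by
      rw [← SetLike.mem_coe, huniv]; trivial
    exact hMmax.ne_top ((Ideal.eq_top_iff_one M).2 h1)
  -- Not of the form M_z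
  have hnotMz : ∀ z : ℂ, ¬∀ f : Entire, f ∈ M ↔ (f : C(ℂ, ℂ)) z = 0 := by
    intro z h
    by_cases hz : ∃ m : ℕ, z = (m : ℂ)
    · obtain ⟨m, rfl⟩ := hz
      have h1 := (h (gammaInv (m + 1))).1 (hIM (gammaInv_mem (m + 1)))
      rw [gammaInv_apply] at h1
      have h2 : ((m + 1 : ℕ) : ℂ) - (m : ℂ) = 1 := by push_cast; ring
      rw [h2, Complex.Gamma_one, inv_one] at h1
      exact one_ne_zero h1
    · have h1 := (h (gammaInv 0)).1 (hIM (gammaInv_mem 0))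
      rw [gammaInv_apply] at h1
      rw [inv_eq_zero, Complex.Gamma_eq_zero_iff] at h1
      obtain ⟨m, hm⟩ := h1
      exact hz ⟨m, by push_cast at hm; linear_combination -hm⟩
  refine ⟨M, hMmax, hdense, hnotclosed, hnotMz, ?_⟩
  -- Not codimension one
  rintro ⟨ψ, -, hker⟩
  have hψ1 : ψ 1 ≠ 0 := by
    intro h0
    exact hMmax.ne_top ((Ideal.eq_top_iff_one M).2 ((hker 1).2 h0))
  set φ : Entire → ℂ := fun f => ψ f / ψ 1 with hφdef
  have hφker : ∀ f, f ∈ M ↔ φ f = 0 := by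
    intro f
    rw [hker f, hφdef]
    simp only [div_eq_zero_iff]
    exact ⟨fun h => Or.inl h, fun h => h.resolve_right hψ1⟩
  have hφ1 : φ 1 = 1 := div_self hψ1
  have hφadd : ∀ x y : Entire, φ (x + y) = φ x + φ y := by
    intro x y; simp only [hφdef, map_add, add_div]
  have hφsmul : ∀ (c : ℂ) (x : Entire), φ (c • x) = c * φ x := by
    intro c x; simp only [hφdef, map_smul, smul_eq_mul, mul_div_assoc]
  have hφsub : ∀ x y : Entire, φ (x - y) = φ x - φ y := by
    intro x y
    have h1 : x - y = x + (-1 : ℂ) • y := by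
      module
    rw [h1, hφadd, hφsmul]; ring
  have hmem : ∀ f : Entire, f - φ f • 1 ∈ M := by
    intro f
    rw [hφker, hφsub, hφsmul, hφ1, mul_one, sub_self]
  have hφmul : ∀ f g : Entire, φ (f * g) = φ f * φ g := by
    intro f g
    have hm : (f - φ f • 1) * (g - φ g • 1) ∈ M :=
      Ideal.mul_mem_right _ M (hmem f)
    have h0 : φ ((f - φ f • 1) * (g - φ g • 1)) = 0 := (hφker _).1 hm
    have hexp : (f - φ f • 1) * (g - φ g • 1)
        = f * g - φ g • f - φ f • g + φ f • φ g • (1 : Entire) := by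
      simp only [Algebra.smul_def]
      ring
    rw [hexp, hφadd, hφsub, hφsub, hφsmul, hφsmul, hφsmul, hφsmul, hφ1, mul_one] at h0
    linear_combination h0
  -- the identity function as an element of Entire
  set X : Entire := ⟨ContinuousMap.id ℂ, differentiable_id⟩ with hX
  obtain ⟨z₀, hz₀⟩ : ∃ z : ℂ, φ X = z := ⟨_, rfl⟩
  have heval : ∀ f : Entire, φ f = (f : C(ℂ, ℂ)) z₀ := by
    intro f
    have hd : Differentiable ℂ (dslope (f : C(ℂ, ℂ)) z₀) := by
      have h1 : DifferentiableOn ℂ (dslope (f : C(ℂ, ℂ)) z₀) Set.univ :=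
        (Complex.differentiableOn_dslope (Filter.univ_mem)).2 f.2.differentiableOn
      rwa [← differentiableOn_univ]
    set d : Entire := ⟨⟨dslope (f : C(ℂ, ℂ)) z₀, hd.continuous⟩, hd⟩ with hdd
    have key : f = ((f : C(ℂ, ℂ)) z₀) • 1 + (X - z₀ • 1) * d := by
      apply Subtype.ext
      apply ContinuousMap.ext
      intro w
      have hs := sub_smul_dslope (⇑(f : C(ℂ, ℂ))) z₀ w
      rw [smul_eq_mul] at hs
      show (f : C(ℂ, ℂ)) w
        = (f : C(ℂ, ℂ)) z₀ * 1 + (w - z₀ * 1) * dslope (⇑(f : C(ℂ, ℂ))) z₀ w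
      rw [mul_one, mul_one, ← sub_eq_iff_eq_add']
      exact hs.symm
    calc φ f = φ (((f : C(ℂ, ℂ)) z₀) • 1 + (X - z₀ • 1) * d) := by rw [← key]
      _ = (f : C(ℂ, ℂ)) z₀ * φ 1 + φ (X - z₀ • 1) * φ d := by
          rw [hφadd, hφsmul, hφmul]
      _ = (f : C(ℂ, ℂ)) z₀ := by
          rw [hφsub, hφsmul, hφ1, hz₀]; ring
  apply hnotMz z₀
  intro f
  rw [hφker f, heval f]
end

section
/- There exists a commutative radical Banach algebra R such that the closure of R² equals R but R possesses a maximal ideal (necessarily of codimension 1). -/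
/-- A bundled commutative Banach algebra (not necessarily unital). -/
structure CommBanachAlgebra where
  carrier : Type
  [ring : NonUnitalNormedCommRing carrier]
  [normedSpace : NormedSpace ℂ carrier]
  [isScalarTower : IsScalarTower ℂ carrier carrier]
  [smulCommClass : SMulCommClass ℂ carrier carrier]
  [complete : CompleteSpace carrier]

attribute [instance] CommBanachAlgebra.ring CommBanachAlgebra.normedSpace
  CommBanachAlgebra.isScalarTower CommBanachAlgebra.smulCommClass CommBanachAlgebra.complete

/-- `R` is a radical algebra: every element is quasi-invertible. -/
def IsRadicalAlgebra (R : Type*) [NonUnitalCommRing R] [Module ℂ R] : Prop :=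
  ∀ a : R, ∃ b : R, a + b - a * b = 0

/-!
`R = {f ∈ C([0,1], ℂ) | f 0 = 0}` with the truncated convolution `(f * g)(x) = ∫₀ˣ f(s) g(x - s) ds`
is a commutative Banach algebra. Inductively `|aⁿ⁺¹(t)| ≤ ‖a‖ⁿ⁺¹ tⁿ / n!`, so `-∑ aⁿ⁺¹` converges
and is a quasi-inverse of `a`: `R` is radical. Convolving with bumps of mass one concentrated near
`0` approximates every element, so `R²` is dense. Yet every product is `o(t)` at `0` while `t ↦ t`
is not, so `R² ≠ R`; a hyperplane containing `R²` is automatically an ideal, and a maximal one.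
-/

noncomputable section

open MeasureTheory Set Filter Topology Asymptotics Function intervalIntegral
open ContinuousLinearMap (mul)
open scoped unitInterval Convolution Nat

open LinearMap in
theorem isMaximalIdeal_ker_of_sqIdeal_le {A : Type*} [NonUnitalCommRing A] [Module ℂ A]
    {ℓ : Module.Dual ℂ A} (hℓ : ℓ ≠ 0) (h : sqIdeal A ≤ ker ℓ) : IsMaximalIdeal (ker ℓ) := by
  have hcoatom := isCoatom_ker_of_surjective (surjective_of_ne_zero hℓ)
  refine ⟨fun a x _ ↦ h (Submodule.subset_span ⟨a, x, rfl⟩), hcoatom.1, fun N _ hN ↦ ?_⟩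
  exact (eq_or_lt_of_le hN).imp Eq.symm (hcoatom.2 N)

theorem exists_isMaximalIdeal_finrank_quotient_eq_one {A : Type*} [NonUnitalCommRing A]
    [Module ℂ A] (h : sqIdeal A ≠ ⊤) :
    ∃ M : Submodule ℂ A, IsMaximalIdeal M ∧ Module.finrank ℂ (A ⧸ M) = 1 := by
  obtain ⟨x, -, hx⟩ := SetLike.exists_of_lt h.lt_top
  obtain ⟨ℓ, hℓx, hℓ⟩ := Submodule.exists_dual_map_eq_bot_of_notMem hx inferInstance
  have hℓ0 : ℓ ≠ 0 := by rintro rfl; exact hℓx rfl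
  refine ⟨LinearMap.ker ℓ, isMaximalIdeal_ker_of_sqIdeal_le hℓ0 ?_, ?_⟩
  · exact LinearMap.le_ker_iff_map.2 hℓ
  · rw [(ℓ.quotKerEquivOfSurjective (LinearMap.surjective_of_ne_zero hℓ0)).finrank_eq,
      Module.finrank_self]

theorem exists_add_sub_mul_eq_zero_of_summable_iterate {R : Type*} [NonUnitalRing R]
    [TopologicalSpace R] [IsTopologicalRing R] [T2Space R] {a : R}
    (hs : Summable fun n ↦ (a * ·)^[n] a) : ∃ b : R, a + b - a * b = 0 := by
  refine ⟨-∑' n, (a * ·)^[n] a, ?_⟩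
  have hmul : a * ∑' n, (a * ·)^[n] a = ∑' n, (a * ·)^[n + 1] a := by
    simp only [← hs.tsum_mul_left, Function.iterate_succ_apply']
  rw [mul_neg, hmul, hs.tsum_eq_zero_add, Function.iterate_zero_apply]
  abel

theorem integrable_of_norm_le_of_support_subset {α E : Type*} [MeasurableSpace α]
    [NormedAddCommGroup E] {μ : Measure α} {f : α → E} {s : Set α} (hs : μ s ≠ ⊤)
    (hsupp : support f ⊆ s) (hf : AEStronglyMeasurable f μ) {C : ℝ} (hC : ∀ a, ‖f a‖ ≤ C) :
    Integrable f μ :=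
  (integrableOn_iff_integrable_of_support_subset hsupp).1
    (Measure.integrableOn_of_bounded hs hf (ae_of_all _ hC))

section causal

variable {f g : ℝ → ℂ} {a x : ℝ}

theorem convolution_indicator_Iic_left (hg : ∀ t < 0, g t = 0) (hx : x ≤ a) :
    ((Iic a).indicator f ⋆[mul ℂ ℂ] g) x = (f ⋆[mul ℂ ℂ] g) x := by
  simp only [convolution_def]
  congr 1 with t
  by_cases ht : t ≤ a
  · rw [indicator_of_mem (mem_Iic.2 ht)]
  · simp [hg (x - t) (by linarith [not_le.1 ht])]

theorem convolution_indicator_Iic_right (hf : ∀ t < 0, f t = 0) (hx : x ≤ a) :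
    (f ⋆[mul ℂ ℂ] (Iic a).indicator g) x = (f ⋆[mul ℂ ℂ] g) x := by
  simp only [convolution_def]
  congr 1 with t
  by_cases ht : x - t ≤ a
  · rw [indicator_of_mem (mem_Iic.2 ht)]
  · simp [hf t (by linarith [not_le.1 ht])]

end causal

namespace Volterra

def extend (f : C(I, ℂ)) : ℝ → ℂ := IccExtend zero_le_one f

@[fun_prop]
lemma continuous_extend (f : C(I, ℂ)) : Continuous (extend f) :=
  continuous_IccExtend_iff.2 f.continuous

lemma norm_extend_le (f : C(I, ℂ)) (t : ℝ) : ‖extend f t‖ ≤ ‖f‖ :=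
  f.norm_coe_le_norm _

lemma extend_of_mem (f : C(I, ℂ)) {t : ℝ} (ht : t ∈ I) : extend f t = f ⟨t, ht⟩ :=
  IccExtend_of_mem _ _ ht

lemma extend_of_nonpos (f : C(I, ℂ)) {t : ℝ} (ht : t ≤ 0) : extend f t = f 0 :=
  IccExtend_of_le_left _ _ ht

@[simp] lemma extend_add (f g : C(I, ℂ)) : extend (f + g) = extend f + extend g := rfl

@[simp] lemma extend_smul (c : ℂ) (f : C(I, ℂ)) : extend (c • f) = c • extend f := rfl

@[simp] lemma extend_zero : extend 0 = 0 := rfl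

def conv (f g : C(I, ℂ)) : C(I, ℂ) where
  toFun x := ∫ s in (0 : ℝ)..x, extend f s * extend g (x - s)
  continuous_toFun :=
    continuous_parametric_intervalIntegral_of_continuous (by fun_prop) continuous_subtype_val

lemma conv_apply (f g : C(I, ℂ)) (x : I) :
    conv f g x = ∫ s in (0 : ℝ)..x, extend f s * extend g (x - s) := rfl

lemma intervalIntegrable_conv_integrand (f g : C(I, ℂ)) (x a b : ℝ) :
    IntervalIntegrable (fun s ↦ extend f s * extend g (x - s)) volume a b :=
  Continuous.intervalIntegrable (by fun_prop) _ _

lemma conv_comm (f g : C(I, ℂ)) : conv f g = conv g f := by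
  ext x
  simp only [conv_apply]
  have := integral_comp_sub_left (fun s ↦ extend g s * extend f (x - s)) (x : ℝ) (a := 0) (b := x)
  simp only [sub_sub_cancel, sub_zero, sub_self] at this
  simp_rw [← this, mul_comm]

lemma conv_add_left (f g h : C(I, ℂ)) : conv (f + g) h = conv f h + conv g h := by
  ext x
  simp only [conv_apply, ContinuousMap.add_apply, extend_add, Pi.add_apply, add_mul]
  exact integral_add (intervalIntegrable_conv_integrand f h _ _ _)
    (intervalIntegrable_conv_integrand g h _ _ _)

lemma conv_smul_left (c : ℂ) (f g : C(I, ℂ)) : conv (c • f) g = c • conv f g := by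
  ext x
  simp only [conv_apply, ContinuousMap.smul_apply, extend_smul, Pi.smul_apply, smul_eq_mul,
    mul_assoc, intervalIntegral.integral_const_mul]

lemma conv_zero_left (g : C(I, ℂ)) : conv 0 g = 0 := by
  ext x
  simp [conv_apply]

lemma conv_add_right (f g h : C(I, ℂ)) : conv f (g + h) = conv f g + conv f h := by
  rw [conv_comm, conv_add_left, conv_comm g, conv_comm h]

lemma conv_smul_right (c : ℂ) (f g : C(I, ℂ)) : conv f (c • g) = c • conv f g := by
  rw [conv_comm, conv_smul_left, conv_comm]

lemma conv_zero_right (f : C(I, ℂ)) : conv f 0 = 0 := by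
  rw [conv_comm, conv_zero_left]

lemma conv_apply_zero (f g : C(I, ℂ)) : conv f g 0 = 0 :=
  integral_same

lemma norm_conv_apply_le {f : C(I, ℂ)} {c : ℝ} (g : C(I, ℂ)) (x : I)
    (hf : ∀ s ∈ Ioc 0 (x : ℝ), ‖extend f s‖ ≤ c) : ‖conv f g x‖ ≤ c * ‖g‖ * x := by
  refine (intervalIntegral.norm_integral_le_of_norm_le_const (C := c * ‖g‖)
    fun s hs ↦ ?_).trans_eq ?_
  · rw [uIoc_of_le x.2.1] at hs
    rw [norm_mul]
    exact mul_le_mul (hf s hs) (norm_extend_le g _) (norm_nonneg _)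
      ((norm_nonneg _).trans (hf s hs))
  · rw [sub_zero, abs_of_nonneg x.2.1]

lemma norm_conv_le (f g : C(I, ℂ)) : ‖conv f g‖ ≤ ‖f‖ * ‖g‖ := by
  refine (ContinuousMap.norm_le _ (by positivity)).2 fun x ↦ ?_
  calc ‖conv f g x‖ ≤ ‖f‖ * ‖g‖ * x := norm_conv_apply_le g x fun s _ ↦ norm_extend_le f s
    _ ≤ ‖f‖ * ‖g‖ := mul_le_of_le_one_right (by positivity) x.2.2

lemma norm_conv_apply_le_pow (f : C(I, ℂ)) {g : C(I, ℂ)} {C : ℝ} {n : ℕ}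
    (hg : ∀ t, ‖g t‖ ≤ C * t ^ n / n !) (x : I) :
    ‖conv f g x‖ ≤ ‖f‖ * C * x ^ (n + 1) / (n + 1)! := by
  have hbound : ∀ s ∈ Ioc 0 (x : ℝ),
      ‖extend f s * extend g (x - s)‖ ≤ ‖f‖ * (C * (x - s) ^ n / n !) := by
    intro s hs
    have hxs : (x : ℝ) - s ∈ I := ⟨by linarith [hs.2], by linarith [hs.1, x.2.2]⟩
    rw [norm_mul, extend_of_mem g hxs]
    exact mul_le_mul (norm_extend_le f s) (hg _) (norm_nonneg _) (norm_nonneg _)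
  refine (norm_integral_le_of_norm_le x.2.1 (ae_of_all _ hbound)
    (Continuous.intervalIntegrable (by fun_prop) _ _)).trans_eq ?_
  have hpow : ∫ s in (0 : ℝ)..x, ((x : ℝ) - s) ^ n = x ^ (n + 1) / (n + 1) := by
    simp [integral_comp_sub_left fun s ↦ s ^ n, integral_pow]
  calc ∫ s in (0 : ℝ)..x, ‖f‖ * (C * (x - s) ^ n / n !)
      = ‖f‖ * C / n ! * ∫ s in (0 : ℝ)..x, ((x : ℝ) - s) ^ n := by
        rw [← intervalIntegral.integral_const_mul]
        congr 1 with s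
        ring
    _ = ‖f‖ * C * x ^ (n + 1) / (n + 1)! := by
        rw [hpow, Nat.factorial_succ]
        push_cast
        field_simp

/-- On `[0,1]`, `conv` is Mathlib's convolution on `ℝ` of zero extensions, which brings
associativity within reach. -/
def zeroExtend (f : C(I, ℂ)) : ℝ → ℂ := indicator I (extend f)

lemma norm_zeroExtend_le (f : C(I, ℂ)) (t : ℝ) : ‖zeroExtend f t‖ ≤ ‖f‖ :=
  (norm_indicator_le_norm_self _ _).trans (norm_extend_le f t)

@[fun_prop]
lemma measurable_zeroExtend (f : C(I, ℂ)) : Measurable (zeroExtend f) :=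
  (continuous_extend f).measurable.indicator measurableSet_Icc

lemma support_zeroExtend_subset (f : C(I, ℂ)) : support (zeroExtend f) ⊆ I :=
  support_indicator_subset

lemma zeroExtend_of_neg (f : C(I, ℂ)) {t : ℝ} (ht : t < 0) : zeroExtend f t = 0 :=
  indicator_of_notMem (fun h : t ∈ I ↦ (not_le.2 ht) h.1) _

lemma convolutionExistsAt_zeroExtend (f g : C(I, ℂ)) (x : ℝ) :
    ConvolutionExistsAt (zeroExtend f) (zeroExtend g) x (mul ℂ ℂ) volume := by
  refine integrable_of_norm_le_of_support_subset (s := I) measure_Icc_lt_top.ne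
    ((support_mul_subset_left _ _).trans (support_zeroExtend_subset f)) ?_ (C := ‖f‖ * ‖g‖)
    fun t ↦ ?_
  · exact Measurable.aestronglyMeasurable (by simp only [ContinuousLinearMap.mul_apply']; fun_prop)
  · simpa using mul_le_mul (norm_zeroExtend_le f t) (norm_zeroExtend_le g _) (norm_nonneg _)
      (norm_nonneg _)

lemma convolution_zeroExtend_eq_setIntegral (f g : C(I, ℂ)) {x : ℝ} (hx : x ≤ 1) :
    (zeroExtend f ⋆[mul ℂ ℂ] zeroExtend g) x = ∫ t in Icc 0 x, extend f t * extend g (x - t) := by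
  rw [convolution_def, ← MeasureTheory.integral_indicator measurableSet_Icc]
  congr 1 with t
  simp only [ContinuousLinearMap.mul_apply', zeroExtend, indicator_apply, mem_Icc]
  split_ifs <;> first | rfl | (exfalso; grind) | simp

lemma convolution_zeroExtend_of_neg (f g : C(I, ℂ)) {x : ℝ} (hx : x < 0) :
    (zeroExtend f ⋆[mul ℂ ℂ] zeroExtend g) x = 0 := by
  rw [convolution_zeroExtend_eq_setIntegral f g (hx.le.trans zero_le_one),
    Icc_eq_empty (not_le.2 hx), Measure.restrict_empty, integral_zero_measure]

lemma conv_apply_eq_convolution (f g : C(I, ℂ)) (x : I) :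
    conv f g x = (zeroExtend f ⋆[mul ℂ ℂ] zeroExtend g) x := by
  rw [conv_apply, convolution_zeroExtend_eq_setIntegral f g x.2.2, integral_Icc_eq_integral_Ioc,
    integral_of_le x.2.1]

lemma zeroExtend_conv (f g : C(I, ℂ)) :
    zeroExtend (conv f g) = (Iic 1).indicator (zeroExtend f ⋆[mul ℂ ℂ] zeroExtend g) := by
  ext x
  by_cases hx1 : x ≤ 1
  · rw [indicator_of_mem (mem_Iic.2 hx1)]
    by_cases hx0 : 0 ≤ x
    · have hx : x ∈ I := ⟨hx0, hx1⟩
      rw [zeroExtend, indicator_of_mem hx, extend_of_mem _ hx, conv_apply_eq_convolution]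
    · rw [zeroExtend_of_neg _ (not_le.1 hx0), convolution_zeroExtend_of_neg f g (not_le.1 hx0)]
  · rw [indicator_of_notMem (mt mem_Iic.1 hx1), zeroExtend,
      indicator_of_notMem fun h : x ∈ I ↦ hx1 h.2]

lemma integrable_zeroExtend_assoc_integrand (f g h : C(I, ℂ)) (x : ℝ) :
    Integrable (uncurry fun s t ↦
      mul ℂ ℂ (zeroExtend f t) (mul ℂ ℂ (zeroExtend g (s - t)) (zeroExtend h (x - s))))
      (volume.prod volume) := by
  refine integrable_of_norm_le_of_support_subset (s := Icc (x - 1) x ×ˢ I)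
    (isCompact_Icc.prod isCompact_Icc).measure_lt_top.ne ?_ ?_ (C := ‖f‖ * (‖g‖ * ‖h‖))
    fun ⟨s, t⟩ ↦ ?_
  · rintro ⟨s, t⟩ hst
    simp only [mem_support, uncurry_apply_pair, ContinuousLinearMap.mul_apply', ne_eq,
      mul_eq_zero, not_or] at hst
    have ht := support_zeroExtend_subset f hst.1
    have hs := support_zeroExtend_subset h hst.2.2
    exact ⟨⟨by linarith [hs.2], by linarith [hs.1]⟩, ht⟩
  · exact Measurable.aestronglyMeasurable (by simp only [ContinuousLinearMap.mul_apply']; fun_prop)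
  · simp only [uncurry_apply_pair, ContinuousLinearMap.mul_apply', norm_mul]
    gcongr <;> apply norm_zeroExtend_le

lemma conv_assoc (f g h : C(I, ℂ)) : conv (conv f g) h = conv f (conv g h) := by
  ext x
  -- Cutting the inner convolution off beyond `1` is invisible at `x ≤ 1`, because the outer
  -- factor vanishes on `(-∞, 0)`.
  rw [conv_apply_eq_convolution, conv_apply_eq_convolution, zeroExtend_conv, zeroExtend_conv,
    convolution_indicator_Iic_left (fun _ ↦ zeroExtend_of_neg h) x.2.2,
    convolution_indicator_Iic_right (fun _ ↦ zeroExtend_of_neg f) x.2.2]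
  exact convolution_assoc' _ _ _ _ (fun _ _ _ ↦ mul_assoc _ _ _)
    (ae_of_all _ (convolutionExistsAt_zeroExtend f g))
    (ae_of_all _ (convolutionExistsAt_zeroExtend g h))
    (integrable_zeroExtend_assoc_integrand f g h x)

def bump (δ s : ℝ) : ℝ := 6 / δ ^ 3 * max (s * (δ - s)) 0

section bump

variable {δ : ℝ}

@[fun_prop]
lemma continuous_bump (δ : ℝ) : Continuous (bump δ) := by
  unfold bump; fun_prop

lemma bump_nonneg (hδ : 0 < δ) (s : ℝ) : 0 ≤ bump δ s := by
  unfold bump; positivity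

lemma bump_of_le (hδ : 0 < δ) {s : ℝ} (hs : δ ≤ s) : bump δ s = 0 := by
  rw [bump, max_eq_right (by nlinarith), mul_zero]

lemma integral_bump (hδ : 0 < δ) : ∫ s in (0 : ℝ)..δ, bump δ s = 1 := by
  have hpoly : ∫ s in (0 : ℝ)..δ, (s * δ - s ^ 2) = δ ^ 3 / 6 := by
    rw [integral_sub (Continuous.intervalIntegrable (by fun_prop) _ _)
      (Continuous.intervalIntegrable (by fun_prop) _ _)]
    simp [integral_pow, intervalIntegral.integral_mul_const]
    ring
  have hcongr : EqOn (bump δ) (fun s ↦ 6 / δ ^ 3 * (s * δ - s ^ 2)) (uIcc 0 δ) := by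
    intro s hs
    rw [uIcc_of_le hδ.le] at hs
    rw [bump, max_eq_left (mul_nonneg hs.1 (by linarith [hs.2]))]
    ring
  rw [integral_congr hcongr, intervalIntegral.integral_const_mul, hpoly]
  field_simp

end bump

def bumpMap (δ : ℝ) : C(I, ℂ) :=
  ⟨fun t ↦ (bump δ t : ℂ), by fun_prop⟩

lemma norm_conv_bumpMap_sub_le {a : C(I, ℂ)} (ha0 : a 0 = 0) {δ ε : ℝ} (hδ : 0 < δ)
    (ha : ∀ s t, |s - t| ≤ δ → ‖extend a s - extend a t‖ ≤ ε) :
    ‖conv (bumpMap δ) a - a‖ ≤ ε := by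
  have hε : 0 ≤ ε := by simpa using ha 0 0 (by simp [hδ.le])
  refine (ContinuousMap.norm_le _ hε).2 fun x ↦ ?_
  set A := extend a
  have hint : ∀ b c, IntervalIntegrable (fun s ↦ (bump δ s : ℂ) * A (x - s)) volume b c :=
    fun _ _ ↦ (by fun_prop : Continuous fun s ↦ (bump δ s : ℂ) * A (x - s)).intervalIntegrable _ _
  -- `A` vanishes on `(-∞, 0]`, so beyond the support `[0, δ]` of the bump nothing contributes.
  have htail : EqOn (fun s ↦ (bump δ s : ℂ) * A (x - s)) (fun _ ↦ 0) (uIcc δ x) := by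
    intro s hs
    rcases le_or_gt δ s with h | h
    · simp [bump_of_le hδ h]
    · have hxs : (x : ℝ) ≤ s := (inf_le_iff.1 hs.1).resolve_left (not_le.2 h)
      simp [A, extend_of_nonpos a (sub_nonpos.2 hxs), ha0]
  have hconv : conv (bumpMap δ) a x = ∫ s in (0 : ℝ)..δ, (bump δ s : ℂ) * A (x - s) := by
    calc conv (bumpMap δ) a x = ∫ s in (0 : ℝ)..x, (bump δ s : ℂ) * A (x - s) := by
          refine integral_congr fun s hs ↦ ?_
          rw [uIcc_of_le x.2.1] at hs
          simp only [extend_of_mem _ (show s ∈ I from ⟨hs.1, hs.2.trans x.2.2⟩)]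
          rfl
      _ = _ := by
          rw [← integral_add_adjacent_intervals (hint 0 δ) (hint δ x), integral_congr htail,
            intervalIntegral.integral_zero, add_zero]
  have hdiff :
      conv (bumpMap δ) a x - a x = ∫ s in (0 : ℝ)..δ, (bump δ s : ℂ) * (A (x - s) - A x) := by
    simp only [mul_sub]
    rw [hconv, integral_sub (hint 0 δ) (Continuous.intervalIntegrable (by fun_prop) _ _),
      intervalIntegral.integral_mul_const, intervalIntegral.integral_ofReal, integral_bump hδ]
    simp [A, extend_of_mem a x.2]
  rw [ContinuousMap.sub_apply, hdiff]
  calc _ ≤ ∫ s in (0 : ℝ)..δ, bump δ s * ε := by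
        refine intervalIntegral.norm_integral_le_of_norm_le hδ.le (ae_of_all _ fun s hs ↦ ?_)
          (((continuous_bump δ).mul continuous_const).intervalIntegrable _ _)
        rw [norm_mul, Complex.norm_real, Real.norm_of_nonneg (bump_nonneg hδ s)]
        refine mul_le_mul_of_nonneg_left (ha _ _ ?_) (bump_nonneg hδ s)
        rw [sub_sub_cancel_left, abs_neg, abs_of_pos hs.1]
        exact hs.2
    _ = ε := by rw [intervalIntegral.integral_mul_const, integral_bump hδ, one_mul]

def vanishingAtZero : Submodule ℂ C(I, ℂ) :=
  LinearMap.ker (ContinuousMap.evalCLM ℂ (0 : I) : C(I, ℂ) →L[ℂ] ℂ).toLinearMap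

lemma mem_vanishingAtZero {f : C(I, ℂ)} : f ∈ vanishingAtZero ↔ f 0 = 0 := Iff.rfl

end Volterra

open Volterra

abbrev VolterraAlgebra : Type := vanishingAtZero

namespace VolterraAlgebra

instance : Mul VolterraAlgebra := ⟨fun a b ↦ ⟨conv a b, conv_apply_zero a b⟩⟩

@[simp, norm_cast] lemma coe_mul (a b : VolterraAlgebra) :
    ((a * b : VolterraAlgebra) : C(I, ℂ)) = conv a b := rfl

instance : NonUnitalNormedCommRing VolterraAlgebra where
  __ := (inferInstance : NormedAddCommGroup VolterraAlgebra)
  mul_assoc a b c := Subtype.ext (conv_assoc a b c)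
  left_distrib a b c := Subtype.ext (conv_add_right a b c)
  right_distrib a b c := Subtype.ext (conv_add_left a b c)
  zero_mul a := Subtype.ext (conv_zero_left a)
  mul_zero a := Subtype.ext (conv_zero_right a)
  mul_comm a b := Subtype.ext (conv_comm a b)
  norm_mul_le a b := norm_conv_le a b

instance : IsScalarTower ℂ VolterraAlgebra VolterraAlgebra :=
  ⟨fun c a b ↦ Subtype.ext (conv_smul_left c a b)⟩

instance : SMulCommClass ℂ VolterraAlgebra VolterraAlgebra :=
  ⟨fun c a b ↦ Subtype.ext (conv_smul_right c a b).symm⟩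

instance : CompleteSpace VolterraAlgebra :=
  (ContinuousLinearMap.isClosed_ker _).completeSpace_coe

lemma norm_iterate_mul_apply_le (a : VolterraAlgebra) (n : ℕ) (t : I) :
    ‖((a * ·)^[n] a : C(I, ℂ)) t‖ ≤ ‖a‖ ^ (n + 1) * t ^ n / n ! := by
  induction n generalizing t with
  | zero =>
    simp only [Function.iterate_zero_apply, zero_add, pow_one, pow_zero, mul_one,
      Nat.factorial_zero, Nat.cast_one, div_one]
    exact (a : C(I, ℂ)).norm_coe_le_norm t
  | succ n ih =>
    rw [Function.iterate_succ_apply', coe_mul]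
    refine (norm_conv_apply_le_pow _ ih t).trans_eq ?_
    rw [Submodule.coe_norm]
    ring

lemma norm_iterate_mul_le (a : VolterraAlgebra) (n : ℕ) :
    ‖(a * ·)^[n] a‖ ≤ ‖a‖ ^ (n + 1) / n ! := by
  rw [Submodule.coe_norm]
  refine (ContinuousMap.norm_le _ (by positivity)).2 fun t ↦ ?_
  refine (norm_iterate_mul_apply_le a n t).trans ?_
  gcongr
  exact mul_le_of_le_one_right (by positivity) (pow_le_one₀ t.2.1 t.2.2)

theorem isRadicalAlgebra : IsRadicalAlgebra VolterraAlgebra := fun a ↦ by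
  refine exists_add_sub_mul_eq_zero_of_summable_iterate
    (.of_norm_bounded ?_ (norm_iterate_mul_le a))
  refine ((Real.summable_pow_div_factorial ‖a‖).mul_left ‖a‖).congr fun n ↦ ?_
  rw [pow_succ]
  ring

theorem closure_sqIdeal : closure (sqIdeal VolterraAlgebra : Set VolterraAlgebra) = univ := by
  refine eq_univ_of_forall fun a ↦ Metric.mem_closure_iff.2 fun r hr ↦ ?_
  have hA : UniformContinuous (extend a) :=
    (CompactSpace.uniformContinuous_of_continuous (a : C(I, ℂ)).continuous).comp
      (LipschitzWith.projIcc zero_le_one).uniformContinuous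
  obtain ⟨δ, hδ, hclose⟩ := Metric.uniformContinuous_iff.1 hA (r / 2) (half_pos hr)
  let e : VolterraAlgebra := ⟨bumpMap (δ / 2), by simp [mem_vanishingAtZero, bumpMap, bump]⟩
  refine ⟨e * a, Submodule.subset_span ⟨e, a, rfl⟩, ?_⟩
  rw [dist_comm, dist_eq_norm, Submodule.coe_norm]
  calc ‖((e * a - a : VolterraAlgebra) : C(I, ℂ))‖ = ‖conv (bumpMap (δ / 2)) a - a‖ := rfl
    _ ≤ r / 2 := norm_conv_bumpMap_sub_le a.2 (half_pos hδ) fun s t hst ↦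
        (dist_eq_norm (extend a s) _ ▸ hclose (by rw [Real.dist_eq]; linarith)).le
    _ < r := half_lt_self hr

def littleOId : Submodule ℂ VolterraAlgebra where
  carrier := {f | extend f =o[𝓝[>] 0] fun t : ℝ ↦ (t : ℂ)}
  add_mem' hf hg := hf.add hg
  zero_mem' := isLittleO_zero _ _
  smul_mem' c _ hf := hf.const_smul_left c

lemma mul_mem_littleOId (a b : VolterraAlgebra) : a * b ∈ littleOId := by
  refine isLittleO_iff.2 fun c hc ↦ ?_
  have hc' : 0 < c / (‖b‖ + 1) := by positivity
  have ha : Tendsto (extend a) (𝓝 0) (𝓝 0) := by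
    simpa [extend_of_mem a (left_mem_Icc.2 zero_le_one), ← mem_vanishingAtZero.1 a.2]
      using (continuous_extend a).tendsto 0
  obtain ⟨η, hη, hsmall⟩ :=
    Metric.eventually_nhds_iff.1 (ha.eventually (Metric.closedBall_mem_nhds 0 hc'))
  filter_upwards [Ioo_mem_nhdsGT (lt_min hη one_pos)] with t ht
  have htI : t ∈ I := ⟨ht.1.le, ht.2.le.trans (min_le_right _ _)⟩
  rw [extend_of_mem _ htI, coe_mul, Complex.norm_real, Real.norm_of_nonneg htI.1]
  refine (norm_conv_apply_le (c := c / (‖b‖ + 1)) b ⟨t, htI⟩ fun s hs ↦ ?_).trans ?_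
  · refine mem_closedBall_zero_iff.1 (hsmall ?_)
    rw [Real.dist_0_eq_abs, abs_of_pos hs.1]
    exact hs.2.trans_lt (ht.2.trans_le (min_le_left _ _))
  · rw [← Submodule.coe_norm]
    have : c / (‖b‖ + 1) * ‖b‖ ≤ c := by
      rw [div_mul_eq_mul_div, div_le_iff₀ (by positivity)]
      nlinarith [norm_nonneg b]
    exact mul_le_mul_of_nonneg_right this htI.1

lemma sqIdeal_le_littleOId : sqIdeal VolterraAlgebra ≤ littleOId :=
  Submodule.span_le.2 fun _ ⟨a, b, h⟩ ↦ h ▸ mul_mem_littleOId a b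

lemma sqIdeal_ne_top : sqIdeal VolterraAlgebra ≠ ⊤ := by
  intro h
  let w : VolterraAlgebra := ⟨⟨fun t ↦ ((t : ℝ) : ℂ), by fun_prop⟩, by simp [mem_vanishingAtZero]⟩
  have hw : extend w =o[𝓝[>] 0] fun t : ℝ ↦ (t : ℂ) :=
    sqIdeal_le_littleOId (h ▸ Submodule.mem_top)
  refine isLittleO_irrefl' ?_ (hw.congr' ?_ EventuallyEq.rfl)
  · refine Eventually.frequently ?_
    filter_upwards [self_mem_nhdsWithin] with t (ht : 0 < t)
    simpa using ht.ne'
  · filter_upwards [Ioo_mem_nhdsGT one_pos] with t ht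
    rw [extend_of_mem _ ⟨ht.1.le, ht.2.le⟩]
    rfl

end VolterraAlgebra

end

/-- There is a commutative radical Banach algebra `R` with `closure R² = R` which
nevertheless possesses a maximal ideal, necessarily of codimension `1`. -/
theorem exists_radical_banach_algebra_dense_square_with_maximal_ideal :
    ∃ A : CommBanachAlgebra, IsRadicalAlgebra A.carrier ∧
      closure (sqIdeal A.carrier : Set A.carrier) = Set.univ ∧
      ∃ M : Submodule ℂ A.carrier, IsMaximalIdeal M ∧
        Module.finrank ℂ (A.carrier ⧸ M) = 1 :=
  ⟨⟨VolterraAlgebra⟩, VolterraAlgebra.isRadicalAlgebra, VolterraAlgebra.closure_sqIdeal,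
    exists_isMaximalIdeal_finrank_quotient_eq_one VolterraAlgebra.sqIdeal_ne_top⟩
end
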